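/- arXiv:0804.0405 — 2 statements merged into one kernel-verified Lean document; each statement's English description precedes it below -/
import Mathlib

section
/- Let n ≥ 2, let f : ℝ^{n−1} → ℝ be Lipschitz, let L > max{1, Lip(f)}, and let μ ∈ Δ satisfy μ(H_f^− ∪ C_f) = 0. Then for every 0 < p < ∞ there is a constant C, depending only on n, p, L and the growth constant of μ, such that for every μ-measurable function g : ℝⁿ → ℝ̄: ∫ |g|^p dμ ≤ C ∫_{C_f} N(g)^p dH^{n−1}, where N(g)(x) = sup{|g(y)| : y ∈ Γ(x)} is the non-tangential maximal function. -/
/-!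
A point `x` at height `h` above the graph lies in the cone `Γ(u)` of every `u` within `h / (5 L)`
of its projection. So, off the `μ`-null set below and on the graph, `{|g| > λ}` lies in the tent
over `F = {N(g) > λ}`. The Vitali covering lemma applied to the base balls of the tent covers it by
balls centred on the graph with radii comparable to disjoint base balls inside `F`, and the growth
bound `μ(B(x, r)) ≤ C_μ r^m` gives `μ(tent over F) ≤ C |F|`. The layer cake formula turns this
distribution inequality into the `L^p` bound, and Lebesgue measure on `ℝ^m` is dominated by the
Hausdorff measure of the graph because the projection is `1`-Lipschitz.
-/

open MeasureTheory Metric ENNReal Filter Set Topology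

noncomputable section

/-- Projection of a point of `ℝ^(m+1)` onto its first `m` coordinates. -/
def proj {m : ℕ} (p : EuclideanSpace ℝ (Fin (m + 1))) : EuclideanSpace ℝ (Fin m) :=
  WithLp.toLp 2 (fun i => p i.castSucc)

/-- The graph `C_f` of `f : ℝ^m → ℝ`, as a subset of `ℝ^(m+1)`. -/
def graphSet {m : ℕ} (f : EuclideanSpace ℝ (Fin m) → ℝ) :
    Set (EuclideanSpace ℝ (Fin (m + 1))) :=
  {p | p (Fin.last m) = f (proj p)}

/-- The open region `H_f^-` below the graph of `f`. -/
def lowerSet {m : ℕ} (f : EuclideanSpace ℝ (Fin m) → ℝ) :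
    Set (EuclideanSpace ℝ (Fin (m + 1))) :=
  {p | p (Fin.last m) < f (proj p)}

/-- The cone `Γ((u₀, f u₀)) = {(u,t) : t - f u₀ > 4 L |u - u₀|}`. -/
def cone {m : ℕ} (f : EuclideanSpace ℝ (Fin m) → ℝ) (L : ℝ)
    (u₀ : EuclideanSpace ℝ (Fin m)) : Set (EuclideanSpace ℝ (Fin (m + 1))) :=
  {p | 4 * L * ‖proj p - u₀‖ < p (Fin.last m) - f u₀}

/-- The non-tangential maximal function `N(g)` at the graph point over `u₀`, for an
extended-real-valued `g`. -/
def nontangMax {m : ℕ} (f : EuclideanSpace ℝ (Fin m) → ℝ) (L : ℝ)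
    (g : EuclideanSpace ℝ (Fin (m + 1)) → EReal)
    (u₀ : EuclideanSpace ℝ (Fin m)) : ℝ≥0∞ :=
  ⨆ y ∈ cone f L u₀, (g y).abs

section Coordinates

variable {m : ℕ}

lemma proj_sub (x y : EuclideanSpace ℝ (Fin (m + 1))) : proj (x - y) = proj x - proj y := by
  ext i; simp [proj]

lemma norm_sq_eq_norm_proj_sq_add_sq (x : EuclideanSpace ℝ (Fin (m + 1))) :
    ‖x‖ ^ 2 = ‖proj x‖ ^ 2 + x (Fin.last m) ^ 2 := by
  simp [EuclideanSpace.norm_sq_eq, Fin.sum_univ_castSucc, proj]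

lemma norm_proj_le (x : EuclideanSpace ℝ (Fin (m + 1))) : ‖proj x‖ ≤ ‖x‖ := by
  refine (pow_le_pow_iff_left₀ (norm_nonneg _) (norm_nonneg _) two_ne_zero).1 ?_
  nlinarith [norm_sq_eq_norm_proj_sq_add_sq x]

lemma norm_le_norm_proj_add_abs_last (x : EuclideanSpace ℝ (Fin (m + 1))) :
    ‖x‖ ≤ ‖proj x‖ + |x (Fin.last m)| := by
  refine (pow_le_pow_iff_left₀ (norm_nonneg _) (by positivity) two_ne_zero).1 ?_
  nlinarith [norm_sq_eq_norm_proj_sq_add_sq x, sq_abs (x (Fin.last m)), norm_nonneg (proj x),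
    abs_nonneg (x (Fin.last m))]

lemma lipschitzWith_one_proj : LipschitzWith 1 (proj (m := m)) :=
  LipschitzWith.of_dist_le_mul fun x y => by
    simpa [dist_eq_norm, ← proj_sub] using norm_proj_le (x - y)

def graphPoint (f : EuclideanSpace ℝ (Fin m) → ℝ) (u : EuclideanSpace ℝ (Fin m)) :
    EuclideanSpace ℝ (Fin (m + 1)) :=
  WithLp.toLp 2 (Fin.snoc (α := fun _ => ℝ) u.ofLp (f u))

@[simp]
lemma proj_graphPoint (f : EuclideanSpace ℝ (Fin m) → ℝ) (u : EuclideanSpace ℝ (Fin m)) :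
    proj (graphPoint f u) = u := by
  ext i; simp [proj, graphPoint]

@[simp]
lemma graphPoint_last (f : EuclideanSpace ℝ (Fin m) → ℝ) (u : EuclideanSpace ℝ (Fin m)) :
    graphPoint f u (Fin.last m) = f u := by
  simp [graphPoint]

lemma graphPoint_mem_graphSet (f : EuclideanSpace ℝ (Fin m) → ℝ) (u : EuclideanSpace ℝ (Fin m)) :
    graphPoint f u ∈ graphSet f := by
  simp [graphSet]

end Coordinates

section HausdorffMeasure

variable {m : ℕ}

lemma volume_le_hausdorffMeasure : (volume : Measure (EuclideanSpace ℝ (Fin m))) ≤ μH[m] := by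
  have hvol : (volume : Measure (Fin m → ℝ)) = μH[m] := by
    simpa using (hausdorffMeasure_pi_real (ι := Fin m)).symm
  rw [← (PiLp.volume_preserving_toLp (Fin m)).map_eq, hvol]
  refine Measure.le_iff.2 fun s hs => ?_
  rw [Measure.map_apply (PiLp.volume_preserving_toLp (Fin m)).measurable hs]
  rw [show WithLp.toLp 2 ⁻¹' s = WithLp.ofLp '' s from
    ((WithLp.equiv 2 (Fin m → ℝ)).image_eq_preimage_symm s).symm]
  simpa using (PiLp.lipschitzWith_ofLp 2 (fun _ : Fin m => ℝ)).hausdorffMeasure_image_le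
    (Nat.cast_nonneg m) s

lemma hausdorffMeasure_le_map_proj_restrict_graphSet (f : EuclideanSpace ℝ (Fin m) → ℝ) :
    (μH[m] : Measure (EuclideanSpace ℝ (Fin m))) ≤ (μH[m].restrict (graphSet f)).map proj := by
  refine Measure.le_iff.2 fun s hs => ?_
  have hproj := lipschitzWith_one_proj (m := m).continuous.measurable
  rw [Measure.map_apply hproj hs, Measure.restrict_apply (hproj hs)]
  have hs_eq : s = proj '' (graphPoint f '' s) := by simp [Set.image_image]
  calc μH[m] s = μH[m] (proj '' (graphPoint f '' s)) := by rw [← hs_eq]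
    _ ≤ μH[m] (graphPoint f '' s) := by
      simpa using lipschitzWith_one_proj.hausdorffMeasure_image_le (Nat.cast_nonneg m) _
    _ ≤ μH[m] (proj ⁻¹' s ∩ graphSet f) := by
      gcongr
      rintro _ ⟨u, hu, rfl⟩
      exact ⟨by simpa using hu, graphPoint_mem_graphSet f u⟩

lemma lintegral_le_lintegral_graphSet (f : EuclideanSpace ℝ (Fin m) → ℝ)
    (φ : EuclideanSpace ℝ (Fin m) → ℝ≥0∞) :
    ∫⁻ u, φ u ≤ ∫⁻ x in graphSet f, φ (proj x) ∂μH[m] :=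
  (lintegral_mono' (volume_le_hausdorffMeasure.trans
    (hausdorffMeasure_le_map_proj_restrict_graphSet f)) le_rfl).trans (lintegral_map_le _ _)

end HausdorffMeasure

section LayerCake

lemma volume_Ioi_inter_setOf_ofReal_lt (c : ℝ≥0∞) :
    volume (Ioi 0 ∩ {t : ℝ | ENNReal.ofReal t < c}) = c := by
  rcases eq_or_ne c ∞ with rfl | hc
  · simp
  · have : Ioi 0 ∩ {t : ℝ | ENNReal.ofReal t < c} = Ioo 0 c.toReal := by
      ext t
      simp only [mem_inter_iff, mem_Ioi, mem_Ioo, and_congr_right_iff]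
      exact fun ht => ENNReal.ofReal_lt_iff_lt_toReal ht.le hc
    simp [this, hc]

/-- Mathlib's `lintegral_eq_lintegral_meas_lt` is for real-valued functions; here `h` may take
the value `∞`. -/
lemma lintegral_eq_setLIntegral_Ioi_measure_lt {α : Type*} [MeasurableSpace α] (ν : Measure α)
    [SFinite ν] {h : α → ℝ≥0∞} (hh : AEMeasurable h ν) :
    ∫⁻ x, h x ∂ν = ∫⁻ t in Ioi 0, ν {x | ENNReal.ofReal t < h x} := by
  have hmk : ∀ t : ℝ, ν {x | ENNReal.ofReal t < h x} = ν {x | ENNReal.ofReal t < hh.mk h x} :=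
    fun t => measure_congr <| hh.ae_eq_mk.mono fun x hx => by
      change (_ < h x) = (_ < hh.mk h x)
      rw [hx]
  simp_rw [lintegral_congr_ae hh.ae_eq_mk, hmk]
  have hmeas : Measurable (Function.uncurry fun x (t : ℝ) =>
      {t : ℝ | ENNReal.ofReal t < hh.mk h x}.indicator (1 : ℝ → ℝ≥0∞) t) :=
    measurable_one.indicator <| measurableSet_lt (ENNReal.measurable_ofReal.comp measurable_snd)
      (hh.measurable_mk.comp measurable_fst)
  calc ∫⁻ x, hh.mk h x ∂ν
      = ∫⁻ x, (∫⁻ t in Ioi 0, {t : ℝ | ENNReal.ofReal t < hh.mk h x}.indicator 1 t) ∂ν := by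
        refine lintegral_congr fun x => ?_
        rw [lintegral_indicator_one (measurableSet_lt ENNReal.measurable_ofReal measurable_const),
          Measure.restrict_apply' measurableSet_Ioi, inter_comm,
          volume_Ioi_inter_setOf_ofReal_lt]
    _ = ∫⁻ t in Ioi 0, ∫⁻ x, {x | ENNReal.ofReal t < hh.mk h x}.indicator 1 x ∂ν :=
        lintegral_lintegral_swap hmeas.aemeasurable
    _ = ∫⁻ t in Ioi 0, ν {x | ENNReal.ofReal t < hh.mk h x} :=
        lintegral_congr fun t => lintegral_indicator_one (hh.measurable_mk measurableSet_Ioi)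

end LayerCake

section Tent

variable {m : ℕ} {f : EuclideanSpace ℝ (Fin m) → ℝ} {Lf : NNReal} {L : ℝ}

/-- Since `5 L ≥ 4 L + Lip f`, a point `x` above the graph lies in the cone over every point of
the ball of this radius around `proj x` (`mem_cone_of_dist_lt`). -/
def tentRadius (f : EuclideanSpace ℝ (Fin m) → ℝ) (L : ℝ) (x : EuclideanSpace ℝ (Fin (m + 1))) :
    ℝ :=
  (x (Fin.last m) - f (proj x)) / (5 * L)

def tent (f : EuclideanSpace ℝ (Fin m) → ℝ) (L : ℝ) (F : Set (EuclideanSpace ℝ (Fin m))) :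
    Set (EuclideanSpace ℝ (Fin (m + 1))) :=
  {x | f (proj x) < x (Fin.last m) ∧ ball (proj x) (tentRadius f L x) ⊆ F}

lemma tentRadius_pos (hL : 0 < L) {x : EuclideanSpace ℝ (Fin (m + 1))}
    (hx : f (proj x) < x (Fin.last m)) : 0 < tentRadius f L x :=
  div_pos (sub_pos.2 hx) (by positivity)

lemma mem_cone_of_dist_lt (hf : LipschitzWith Lf f) (hLf : (Lf : ℝ) ≤ L) (hL : 0 < L)
    {x : EuclideanSpace ℝ (Fin (m + 1))} {u : EuclideanSpace ℝ (Fin m)}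
    (hu : dist u (proj x) < tentRadius f L x) : x ∈ cone f L u := by
  have hheight : 5 * L * dist u (proj x) < x (Fin.last m) - f (proj x) := by
    rwa [tentRadius, lt_div_iff₀ (by positivity), mul_comm] at hu
  have hfu : f u - f (proj x) ≤ L * dist u (proj x) :=
    (le_abs_self _).trans <| (hf.dist_le_mul u (proj x)).trans <|
      mul_le_mul_of_nonneg_right hLf dist_nonneg
  change 4 * L * ‖proj x - u‖ < x (Fin.last m) - f u
  rw [← dist_eq_norm, dist_comm]
  linarith

lemma dist_graphPoint_le_of_closedBall_subset (hm : 1 ≤ m) (hf : LipschitzWith Lf f)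
    (hLf : (Lf : ℝ) ≤ L) (hL : 0 < L) {a b : EuclideanSpace ℝ (Fin (m + 1))}
    (ha : f (proj a) < a (Fin.last m))
    (hab : closedBall (proj a) (tentRadius f L a) ⊆ closedBall (proj b) (5 * tentRadius f L b)) :
    dist a (graphPoint f (proj b)) ≤ (5 + 30 * L) * tentRadius f L b := by
  have : Nonempty (Fin m) := ⟨⟨0, hm⟩⟩
  set ra := tentRadius f L a
  set rb := tentRadius f L b
  have hra : 0 ≤ ra := (tentRadius_pos hL ha).le
  have hd : dist (proj a) (proj b) ≤ 5 * rb := hab (mem_closedBall_self hra)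
  have hrab : ra ≤ 5 * rb := by
    have := diam_mono hab isBounded_closedBall
    rw [diam_closedBall_eq _ hra, diam_closedBall_eq _ (dist_nonneg.trans hd)] at this
    linarith
  have hheight : a (Fin.last m) - f (proj a) = 5 * L * ra := by
    simp only [ra, tentRadius]
    field_simp
  have hlip : |f (proj a) - f (proj b)| ≤ L * (5 * rb) :=
    (hf.dist_le_mul _ _).trans (mul_le_mul hLf hd dist_nonneg hL.le)
  calc dist a (graphPoint f (proj b))
      ≤ dist (proj a) (proj b) + |a (Fin.last m) - f (proj b)| := by
        simpa [dist_eq_norm, proj_sub] using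
          norm_le_norm_proj_add_abs_last (a - graphPoint f (proj b))
    _ ≤ 5 * rb + (5 * L * ra + L * (5 * rb)) := by
        gcongr
        rw [← hheight]
        exact (abs_sub_le _ _ _).trans (by rw [abs_of_pos (sub_pos.2 ha)]; linarith)
    _ ≤ (5 + 30 * L) * rb := by nlinarith

end Tent

section TentMeasure

variable {m : ℕ} {f : EuclideanSpace ℝ (Fin m) → ℝ} {Lf : NNReal} {L : ℝ}
  {μ : Measure (EuclideanSpace ℝ (Fin (m + 1)))} {Cμ : ℝ}

def growthConst (m : ℕ) (Cμ K : ℝ) : ℝ≥0∞ :=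
  ENNReal.ofReal (Cμ * K ^ m) / volume (ball (0 : EuclideanSpace ℝ (Fin m)) 1)

lemma growthConst_ne_top (m : ℕ) (Cμ K : ℝ) : growthConst m Cμ K ≠ ∞ :=
  ENNReal.div_ne_top ENNReal.ofReal_ne_top (measure_ball_pos volume _ one_pos).ne'

lemma measure_closedBall_le_growthConst_mul
    (hμΔ : ∀ (x : EuclideanSpace ℝ (Fin (m + 1))) (r : ℝ), 0 < r →
      μ (closedBall x r) ≤ ENNReal.ofReal (Cμ * r ^ m))
    {K : ℝ} (hK : 0 < K) (x : EuclideanSpace ℝ (Fin (m + 1))) (u : EuclideanSpace ℝ (Fin m))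
    {r : ℝ} (hr : 0 < r) :
    μ (closedBall x (K * r)) ≤ growthConst m Cμ K * volume (ball u r) := by
  have hv₁ : volume (ball (0 : EuclideanSpace ℝ (Fin m)) 1) ≠ 0 :=
    (measure_ball_pos volume _ one_pos).ne'
  calc μ (closedBall x (K * r)) ≤ ENNReal.ofReal (Cμ * K ^ m) * ENNReal.ofReal (r ^ m) := by
        rw [← ENNReal.ofReal_mul' (by positivity), mul_assoc, ← mul_pow]
        exact hμΔ x _ (by positivity)
    _ = growthConst m Cμ K * volume (ball u r) := by
        rw [growthConst, Measure.addHaar_ball_of_pos _ _ hr, finrank_euclideanSpace_fin,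
          ← mul_assoc, mul_right_comm _ _ (volume _),
          ENNReal.div_mul_cancel hv₁ measure_ball_lt_top.ne]

variable (hm : 1 ≤ m) (hf : LipschitzWith Lf f) (hLf : (Lf : ℝ) ≤ L) (hL : 0 < L)
  (hμΔ : ∀ (x : EuclideanSpace ℝ (Fin (m + 1))) (r : ℝ), 0 < r →
    μ (closedBall x r) ≤ ENNReal.ofReal (Cμ * r ^ m))
include hm hf hLf hL hμΔ

/-- The radius bound `R` is what the Vitali covering lemma needs; `measure_tent_le` removes it. -/
lemma measure_tent_inter_le (F : Set (EuclideanSpace ℝ (Fin m))) (R : ℝ) :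
    μ (tent f L F ∩ {x | tentRadius f L x ≤ R}) ≤
      growthConst m Cμ (5 + 30 * L) * volume F := by
  set T := tent f L F ∩ {x | tentRadius f L x ≤ R}
  set r := tentRadius f L
  have hr : ∀ x ∈ T, 0 < r x := fun x hx => tentRadius_pos hL hx.1.1
  obtain ⟨u, huT, hdisj, hcov⟩ :=
    Vitali.exists_disjoint_subfamily_covering_enlargement_closedBall T proj r R
      (fun x hx => hx.2) 5 (by norm_num)
  have hu : u.Countable := hdisj.countable_of_nonempty_interior fun b hb =>
    ⟨proj b, ball_subset_interior_closedBall (mem_ball_self (hr b (huT hb)))⟩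
  calc μ T ≤ μ (⋃ b ∈ u, closedBall (graphPoint f (proj b)) ((5 + 30 * L) * r b)) := by
        refine measure_mono fun a ha => ?_
        obtain ⟨b, hb, hab⟩ := hcov a ha
        exact mem_biUnion hb (dist_graphPoint_le_of_closedBall_subset hm hf hLf hL ha.1.1 hab)
    _ ≤ ∑' b : u, μ (closedBall (graphPoint f (proj b)) ((5 + 30 * L) * r b)) :=
        measure_biUnion_le μ hu _
    _ ≤ ∑' b : u, growthConst m Cμ (5 + 30 * L) * volume (ball (proj (b : _)) (r b)) :=
        ENNReal.tsum_le_tsum fun b =>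
          measure_closedBall_le_growthConst_mul hμΔ (by positivity) _ _ (hr b (huT b.2))
    _ = growthConst m Cμ (5 + 30 * L) * volume (⋃ b ∈ u, ball (proj b) (r b)) := by
        rw [ENNReal.tsum_mul_left, measure_biUnion hu (hdisj.mono fun _ => ball_subset_closedBall)
          fun _ _ => measurableSet_ball]
    _ ≤ growthConst m Cμ (5 + 30 * L) * volume F := by
        gcongr
        exact iUnion₂_subset fun b hb => (huT hb).1.2

lemma measure_tent_le (F : Set (EuclideanSpace ℝ (Fin m))) :
    μ (tent f L F) ≤ growthConst m Cμ (5 + 30 * L) * volume F := by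
  have htent : tent f L F = ⋃ R : ℕ, tent f L F ∩ {x | tentRadius f L x ≤ R} := by
    ext x
    simpa using fun _ => exists_nat_ge (tentRadius f L x)
  rw [htent, Monotone.measure_iUnion]
  · exact iSup_le fun R => measure_tent_inter_le hm hf hLf hL hμΔ F R
  · exact fun R S hRS => inter_subset_inter_right _ <|
      ofPred_subset_ofPred.2 fun _ hx => hx.trans (Nat.cast_le.2 hRS)

end TentMeasure

section NontangentialDomination

variable {m : ℕ} {f : EuclideanSpace ℝ (Fin m) → ℝ} {Lf : NNReal} {L : ℝ}
  {μ : Measure (EuclideanSpace ℝ (Fin (m + 1)))} {Cμ : ℝ}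
  {G : EuclideanSpace ℝ (Fin (m + 1)) → ℝ≥0∞} {Φ : EuclideanSpace ℝ (Fin m) → ℝ≥0∞}

lemma setOf_lt_subset_tent_union (hf : LipschitzWith Lf f) (hLf : (Lf : ℝ) ≤ L) (hL : 0 < L)
    (hGΦ : ∀ u, ∀ y ∈ cone f L u, G y ≤ Φ u) (c : ℝ≥0∞) :
    {x | c < G x} ⊆ tent f L {u | c < Φ u} ∪ (lowerSet f ∪ graphSet f) := by
  intro x hx
  rcases lt_trichotomy (x (Fin.last m)) (f (proj x)) with hbelow | hon | habove
  · exact Or.inr (Or.inl hbelow)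
  · exact Or.inr (Or.inr hon)
  · exact Or.inl ⟨habove, fun u hu =>
      hx.trans_le (hGΦ u x (mem_cone_of_dist_lt hf hLf hL (mem_ball.1 hu)))⟩

variable (hm : 1 ≤ m) (hf : LipschitzWith Lf f) (hLf : (Lf : ℝ) ≤ L) (hL : 0 < L)
  (hμΔ : ∀ (x : EuclideanSpace ℝ (Fin (m + 1))) (r : ℝ), 0 < r →
    μ (closedBall x r) ≤ ENNReal.ofReal (Cμ * r ^ m))
  (hμside : μ (lowerSet f ∪ graphSet f) = 0)
  (hGΦ : ∀ u, ∀ y ∈ cone f L u, G y ≤ Φ u)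
include hm hf hLf hL hμΔ hμside hGΦ

lemma measure_lt_le_of_le_cone (c : ℝ≥0∞) :
    μ {x | c < G x} ≤ growthConst m Cμ (5 + 30 * L) * volume {u | c < Φ u} :=
  calc μ {x | c < G x} ≤ μ (tent f L {u | c < Φ u}) + μ (lowerSet f ∪ graphSet f) :=
        (measure_mono (setOf_lt_subset_tent_union hf hLf hL hGΦ c)).trans (measure_union_le _ _)
    _ ≤ growthConst m Cμ (5 + 30 * L) * volume {u | c < Φ u} := by
        rw [hμside, add_zero]
        exact measure_tent_le hm hf hLf hL hμΔ _

lemma lintegral_le_growthConst_mul_lintegral_of_le_cone [SFinite μ] (hG : AEMeasurable G μ)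
    (hΦ : AEMeasurable Φ) :
    ∫⁻ x, G x ∂μ ≤ growthConst m Cμ (5 + 30 * L) * ∫⁻ u, Φ u := by
  rw [lintegral_eq_setLIntegral_Ioi_measure_lt μ hG, lintegral_eq_setLIntegral_Ioi_measure_lt _ hΦ,
    ← lintegral_const_mul' _ _ (growthConst_ne_top _ _ _)]
  exact lintegral_mono fun t => measure_lt_le_of_le_cone hm hf hLf hL hμΔ hμside hGΦ _

end NontangentialDomination

section NontangentialMaximalFunction

variable {m : ℕ} {f : EuclideanSpace ℝ (Fin m) → ℝ} {L : ℝ}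
  {g : EuclideanSpace ℝ (Fin (m + 1)) → EReal}

lemma abs_le_nontangMax {u : EuclideanSpace ℝ (Fin m)} {y : EuclideanSpace ℝ (Fin (m + 1))}
    (hy : y ∈ cone f L u) : (g y).abs ≤ nontangMax f L g u :=
  le_biSup (fun y => (g y).abs) hy

lemma isOpen_setOf_lt_nontangMax (hf : Continuous f) (c : ℝ≥0∞) :
    IsOpen {u | c < nontangMax f L g u} := by
  refine isOpen_iff_forall_mem_open.2 fun u hu => ?_
  obtain ⟨y, hy, hcy⟩ := lt_biSup_iff.1 (show c < ⨆ y ∈ cone f L u, (g y).abs from hu)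
  refine ⟨{v | 4 * L * ‖proj y - v‖ < y (Fin.last m) - f v}, fun v hv => ?_, ?_, hy⟩
  · exact hcy.trans_le (abs_le_nontangMax hv)
  · exact isOpen_lt (by fun_prop) (by fun_prop)

lemma measurable_nontangMax (hf : Continuous f) : Measurable (nontangMax f L g) :=
  measurable_of_Ioi fun c => (isOpen_setOf_lt_nontangMax hf c).measurableSet

end NontangentialMaximalFunction

lemma EReal.measurable_abs : Measurable EReal.abs :=
  EReal.measurable_of_measurable_real <| by simp only [EReal.abs_def]; fun_prop

/-- Carleson measure estimate. If `f` is Lipschitz, `L > max{1, Lip f}` and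
`μ ∈ Δ` vanishes on `H_f^- ∪ C_f`, then for every `0 < p < ∞` there is `C < ∞` with
`∫ |g|^p dμ ≤ C ∫_{C_f} N(g)^p dH^{n-1}` for every `μ`-measurable `g : ℝⁿ → ℝ̄`. -/
theorem statement8 (m : ℕ) (hm : 1 ≤ m)
    (f : EuclideanSpace ℝ (Fin m) → ℝ) (Lf : NNReal) (hf : LipschitzWith Lf f)
    (L : ℝ) (hL : max 1 (Lf : ℝ) < L)
    (μ : Measure (EuclideanSpace ℝ (Fin (m + 1)))) [IsFiniteMeasure μ]
    (Cμ : ℝ)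
    (hμΔ : ∀ (x : EuclideanSpace ℝ (Fin (m + 1))) (r : ℝ), 0 < r →
      μ (closedBall x r) ≤ ENNReal.ofReal (Cμ * r ^ m))
    (hμside : μ (lowerSet f ∪ graphSet f) = 0)
    (p : ℝ) (hp : 0 < p) :
    ∃ C : ℝ≥0∞, C ≠ ∞ ∧
      ∀ g : EuclideanSpace ℝ (Fin (m + 1)) → EReal, AEMeasurable g μ →
        ∫⁻ x, (g x).abs ^ p ∂μ ≤
          C * ∫⁻ x in graphSet f, (nontangMax f L g (proj x)) ^ p ∂(μH[(m : ℝ)]) := by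
  have hLf : (Lf : ℝ) ≤ L := (le_max_right _ _).trans hL.le
  have hL0 : 0 < L := zero_lt_one.trans_le ((le_max_left _ _).trans hL.le)
  refine ⟨growthConst m Cμ (5 + 30 * L), growthConst_ne_top _ _ _, fun g hg => ?_⟩
  have hN := measurable_nontangMax (L := L) (g := g) hf.continuous
  calc ∫⁻ x, (g x).abs ^ p ∂μ
      ≤ growthConst m Cμ (5 + 30 * L) * ∫⁻ u, nontangMax f L g u ^ p :=
        lintegral_le_growthConst_mul_lintegral_of_le_cone hm hf hLf hL0 hμΔ hμside
          (fun u y hy => ENNReal.rpow_le_rpow (abs_le_nontangMax hy) hp.le)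
          ((EReal.measurable_abs.comp_aemeasurable hg).pow_const p)
          (hN.pow_const p).aemeasurable
    _ ≤ growthConst m Cμ (5 + 30 * L) * ∫⁻ x in graphSet f, nontangMax f L g (proj x) ^ p ∂μH[m] :=
        mul_le_mul_right (lintegral_le_lintegral_graphSet f _) _
end
end

section
/- Let n ≥ 2, K ∈ 𝒦 with constant C₁ in the gradient bound, let ν be a finite Radon measure on ℝⁿ, let g ∈ L¹(ν), and let x, y ∈ ℝⁿ with r = |x − y| > 0. Then ∫_{ℝⁿ∖B(x,2r)} |K(x−z) − K(y−z)| |g(z)| dν(z) ≤ 4ⁿ C₁ M_ν g(x), where M_ν g(x) = sup_{ρ>0} ρ^{1−n} ∫_{B(x,ρ)} |g| dν. -/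
open MeasureTheory Metric ENNReal Filter Set Topology

noncomputable section

/-- The maximal function `M_ν g(x) = sup_{ρ>0} ρ^{1-n} ∫_{B(x,ρ)} |g| dν`. -/
def radialMax {n : ℕ} (ν : Measure (EuclideanSpace ℝ (Fin n)))
    (g : EuclideanSpace ℝ (Fin n) → ℝ) (x : EuclideanSpace ℝ (Fin n)) : ℝ≥0∞ :=
  ⨆ (ρ : ℝ) (_ : 0 < ρ),
    ENNReal.ofReal (ρ ^ (1 - (n : ℝ))) * ∫⁻ y in closedBall x ρ, ENNReal.ofReal |g y| ∂ν

/-!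
Split the complement of `B(x, 2r)` into the dyadic annuli `2^{j+1} r ≤ |z - x| < 2^{j+2} r`.
On the `j`-th annulus the segment from `x - z` to `y - z` stays at distance `≥ 2^j r` from the
origin, so the mean value theorem and the gradient bound give
`|K(x-z) - K(y-z)| ≤ C₁ (2^j r)^{-n} r`, while the mass of `|g| ν` on the annulus is at most
`(2^{j+2} r)^{n-1} M_ν g(x)`. The product is `4^{n-1} C₁ 2^{-j} M_ν g(x)`, and summing the
geometric series over `j` gives the bound.
-/

lemma abs_sub_le_mul_rpow_of_norm_fderiv_le {E : Type*} [NormedAddCommGroup E]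
    [NormedSpace ℝ E] {K : E → ℝ} {C s t : ℝ} (hK : DifferentiableOn ℝ K {0}ᶜ)
    (hgrad : ∀ w : E, w ≠ 0 → ‖fderiv ℝ K w‖ ≤ C * ‖w‖ ^ (-s)) (hs : 0 ≤ s) (ht : 0 < t)
    {u v : E} (huv : ‖u - v‖ ≤ t) (hu : 2 * t ≤ ‖u‖) :
    |K u - K v| ≤ C * t ^ (-s) * ‖u - v‖ := by
  have hfar : ∀ w ∈ segment ℝ u v, t ≤ ‖w‖ := fun w hw => by
    have hwu := norm_sub_le_of_mem_segment hw
    have := norm_sub_norm_le u w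
    rw [norm_sub_rev] at hwu huv
    linarith
  have hne : ∀ w ∈ segment ℝ u v, w ≠ 0 := fun w hw h0 => by
    have := hfar w hw
    rw [h0, norm_zero] at this
    linarith
  have hC : 0 ≤ C := nonneg_of_mul_nonneg_left
    ((norm_nonneg _).trans (hgrad u (hne u (left_mem_segment ℝ u v))))
    (Real.rpow_pos_of_pos (ht.trans_le (hfar u (left_mem_segment ℝ u v))) _)
  have hmvt := (convex_segment u v).norm_image_sub_le_of_norm_fderiv_le (f := K)
    (fun w hw => hK.differentiableAt (isOpen_compl_singleton.mem_nhds (hne w hw)))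
    (fun w hw => (hgrad w (hne w hw)).trans (mul_le_mul_of_nonneg_left
      (Real.rpow_le_rpow_of_nonpos ht (hfar w hw) (neg_nonpos.2 hs)) hC))
    (right_mem_segment ℝ u v) (left_mem_segment ℝ u v)
  rwa [Real.norm_eq_abs] at hmvt

lemma setLIntegral_closedBall_le_rpow_mul_radialMax {n : ℕ}
    (ν : Measure (EuclideanSpace ℝ (Fin n))) (g : EuclideanSpace ℝ (Fin n) → ℝ)
    (x : EuclideanSpace ℝ (Fin n)) {ρ : ℝ} (hρ : 0 < ρ) :
    ∫⁻ z in closedBall x ρ, ENNReal.ofReal |g z| ∂ν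
      ≤ ENNReal.ofReal (ρ ^ ((n : ℝ) - 1)) * radialMax ν g x := by
  have hsup : ENNReal.ofReal (ρ ^ (1 - (n : ℝ))) * ∫⁻ z in closedBall x ρ, ENNReal.ofReal |g z| ∂ν
      ≤ radialMax ν g x :=
    le_iSup₂_of_le (f := fun ρ (_ : 0 < ρ) => ENNReal.ofReal (ρ ^ (1 - (n : ℝ))) *
      ∫⁻ z in closedBall x ρ, ENNReal.ofReal |g z| ∂ν) ρ hρ le_rfl
  calc ∫⁻ z in closedBall x ρ, ENNReal.ofReal |g z| ∂ν
      = ENNReal.ofReal (ρ ^ ((n : ℝ) - 1) * ρ ^ (1 - (n : ℝ)))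
          * ∫⁻ z in closedBall x ρ, ENNReal.ofReal |g z| ∂ν := by
        rw [← Real.rpow_add hρ, sub_add_sub_cancel', sub_self, Real.rpow_zero,
          ENNReal.ofReal_one, one_mul]
    _ ≤ ENNReal.ofReal (ρ ^ ((n : ℝ) - 1)) * radialMax ν g x := by
        rw [ENNReal.ofReal_mul (by positivity), mul_assoc]
        gcongr

lemma compl_ball_subset_iUnion_ball_diff_ball {α : Type*} [PseudoMetricSpace α] (x : α)
    {R : ℝ} (hR : 0 < R) :
    (ball x R)ᶜ ⊆ ⋃ j : ℕ, ball x (2 ^ (j + 1) * R) \ ball x (2 ^ j * R) := by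
  intro z hz
  rw [mem_compl_iff, mem_ball, not_lt] at hz
  obtain ⟨j, hlow, hhigh⟩ :=
    exists_nat_pow_near (x := dist z x / R) ((one_le_div hR).2 hz) one_lt_two
  refine mem_iUnion.2 ⟨j, mem_ball.2 ?_, fun hin => (mem_ball.1 hin).not_ge ?_⟩
  · rwa [div_lt_iff₀ hR] at hhigh
  · rwa [le_div_iff₀ hR] at hlow

lemma setLIntegral_ball_diff_ball_le {n : ℕ} {K : EuclideanSpace ℝ (Fin n) → ℝ} {C₁ : ℝ}
    (hK_diff : DifferentiableOn ℝ K {0}ᶜ)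
    (hK_grad : ∀ x : EuclideanSpace ℝ (Fin n), x ≠ 0 →
      ‖fderiv ℝ K x‖ ≤ C₁ * ‖x‖ ^ (-(n : ℝ)))
    (ν : Measure (EuclideanSpace ℝ (Fin n))) (g : EuclideanSpace ℝ (Fin n) → ℝ)
    {x y : EuclideanSpace ℝ (Fin n)} {t : ℝ} (ht : 0 < t) (hxy : ‖x - y‖ ≤ t) :
    ∫⁻ z in ball x (4 * t) \ ball x (2 * t),
        ENNReal.ofReal (|K (x - z) - K (y - z)| * |g z|) ∂ν
      ≤ ENNReal.ofReal (4 ^ ((n : ℝ) - 1) * C₁ * (‖x - y‖ / t)) * radialMax ν g x := by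
  set c := C₁ * t ^ (-(n : ℝ)) * ‖x - y‖
  have hpoint : ∀ z ∈ ball x (4 * t) \ ball x (2 * t),
      ENNReal.ofReal (|K (x - z) - K (y - z)| * |g z|) ≤ ENNReal.ofReal (c * |g z|) := by
    rintro z ⟨-, hz⟩
    have hdiff : (x - z) - (y - z) = x - y := sub_sub_sub_cancel_right x y z
    have hfar : 2 * t ≤ ‖x - z‖ := by
      rw [← dist_eq_norm, dist_comm]
      exact not_lt.1 hz
    have hK := abs_sub_le_mul_rpow_of_norm_fderiv_le hK_diff hK_grad (Nat.cast_nonneg n) ht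
      (hdiff ▸ hxy) hfar
    rw [hdiff] at hK
    gcongr
  have hscalar : c * (4 * t) ^ ((n : ℝ) - 1) = 4 ^ ((n : ℝ) - 1) * C₁ * (‖x - y‖ / t) := by
    simp only [c]
    rw [Real.rpow_neg ht.le, Real.mul_rpow (by norm_num) ht.le, Real.rpow_sub_one ht.ne']
    field_simp
  calc ∫⁻ z in ball x (4 * t) \ ball x (2 * t),
        ENNReal.ofReal (|K (x - z) - K (y - z)| * |g z|) ∂ν
      ≤ ∫⁻ z in ball x (4 * t) \ ball x (2 * t), ENNReal.ofReal c * ENNReal.ofReal |g z| ∂ν := by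
        simp_rw [← ENNReal.ofReal_mul' (abs_nonneg _)]
        exact setLIntegral_mono' (measurableSet_ball.diff measurableSet_ball) hpoint
    _ ≤ ENNReal.ofReal c * ∫⁻ z in closedBall x (4 * t), ENNReal.ofReal |g z| ∂ν := by
        rw [lintegral_const_mul' _ _ ENNReal.ofReal_ne_top]
        gcongr
        exact sdiff_subset.trans ball_subset_closedBall
    _ ≤ ENNReal.ofReal c * (ENNReal.ofReal ((4 * t) ^ ((n : ℝ) - 1)) * radialMax ν g x) := by
        gcongr
        exact setLIntegral_closedBall_le_rpow_mul_radialMax ν g x (by positivity)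
    _ = _ := by
        rw [← mul_assoc, ← ENNReal.ofReal_mul' (by positivity), hscalar]

theorem statement11_general (n : ℕ)
    (K : EuclideanSpace ℝ (Fin n) → ℝ) (C₁ : ℝ)
    (hK_diff : ContDiffOn ℝ 1 K {0}ᶜ)
    (hK_grad : ∀ x : EuclideanSpace ℝ (Fin n), x ≠ 0 →
      ‖fderiv ℝ K x‖ ≤ C₁ * ‖x‖ ^ (-(n : ℝ)))
    (ν : Measure (EuclideanSpace ℝ (Fin n)))
    (g : EuclideanSpace ℝ (Fin n) → ℝ)
    (x y : EuclideanSpace ℝ (Fin n)) (hxy : x ≠ y) :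
    ∫⁻ z in (closedBall x (2 * ‖x - y‖))ᶜ,
        ENNReal.ofReal (|K (x - z) - K (y - z)| * |g z|) ∂ν
      ≤ ENNReal.ofReal (4 ^ n * C₁) * radialMax ν g x := by
  set r := ‖x - y‖
  have hr : 0 < r := norm_pos_iff.2 (sub_ne_zero.2 hxy)
  set a := ENNReal.ofReal (4 ^ ((n : ℝ) - 1) * C₁)
  have hannulus : ∀ j : ℕ, ∫⁻ z in ball x (2 ^ (j + 1) * (2 * r)) \ ball x (2 ^ j * (2 * r)),
      ENNReal.ofReal (|K (x - z) - K (y - z)| * |g z|) ∂ν ≤ a * 2⁻¹ ^ j * radialMax ν g x := by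
    intro j
    have hratio : r / (2 ^ j * r) = 2⁻¹ ^ j := by rw [div_mul_cancel_right₀ hr.ne', inv_pow]
    rw [show 2 ^ (j + 1) * (2 * r) = 4 * (2 ^ j * r) by ring,
      show 2 ^ j * (2 * r) = 2 * (2 ^ j * r) by ring]
    refine (setLIntegral_ball_diff_ball_le (hK_diff.differentiableOn one_ne_zero) hK_grad ν g
      (by positivity) (le_mul_of_one_le_left hr.le (one_le_pow₀ one_le_two))).trans_eq ?_
    rw [hratio, ENNReal.ofReal_mul' (by positivity), ENNReal.ofReal_pow (by norm_num),
      ENNReal.ofReal_inv_of_pos two_pos, ENNReal.ofReal_ofNat]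
  have hconst : a * 4 = ENNReal.ofReal (4 ^ n * C₁) := by
    rw [← ENNReal.ofReal_ofNat 4, ← ENNReal.ofReal_mul' (by norm_num), Real.rpow_sub_one
      (by norm_num), Real.rpow_natCast]
    ring_nf
  calc ∫⁻ z in (closedBall x (2 * r))ᶜ, ENNReal.ofReal (|K (x - z) - K (y - z)| * |g z|) ∂ν
      ≤ ∫⁻ z in ⋃ j : ℕ, ball x (2 ^ (j + 1) * (2 * r)) \ ball x (2 ^ j * (2 * r)),
          ENNReal.ofReal (|K (x - z) - K (y - z)| * |g z|) ∂ν :=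
        lintegral_mono_set ((compl_subset_compl.2 ball_subset_closedBall).trans
          (compl_ball_subset_iUnion_ball_diff_ball x (by positivity)))
    _ ≤ ∑' j : ℕ, a * 2⁻¹ ^ j * radialMax ν g x :=
        (lintegral_iUnion_le _ _).trans (ENNReal.tsum_le_tsum hannulus)
    _ = a * 2 * radialMax ν g x := by
        rw [ENNReal.tsum_mul_right, ENNReal.tsum_mul_left, ENNReal.tsum_geometric,
          ENNReal.one_sub_inv_two, inv_inv]
    _ ≤ ENNReal.ofReal (4 ^ n * C₁) * radialMax ν g x := by
        rw [← hconst]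
        gcongr
        norm_num

/-- For `K ∈ 𝒦` with gradient constant `C₁`, a finite measure `ν`,
`g ∈ L¹(ν)` and `x ≠ y` with `r = |x - y|`:
`∫_{ℝⁿ∖B(x,2r)} |K(x-z) - K(y-z)| |g(z)| dν(z) ≤ 4ⁿ C₁ M_ν g(x)`. -/
theorem statement11 (n : ℕ) (hn : 2 ≤ n)
    (K : EuclideanSpace ℝ (Fin n) → ℝ) (C₀ C₁ : ℝ)
    (hK_diff : ContDiffOn ℝ 1 K {0}ᶜ)
    (hK_anti : ∀ x : EuclideanSpace ℝ (Fin n), x ≠ 0 → K (-x) = -K x)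
    (hK_size : ∀ x : EuclideanSpace ℝ (Fin n), x ≠ 0 →
      |K x| ≤ C₀ * ‖x‖ ^ (-((n : ℝ) - 1)))
    (hK_grad : ∀ x : EuclideanSpace ℝ (Fin n), x ≠ 0 →
      ‖fderiv ℝ K x‖ ≤ C₁ * ‖x‖ ^ (-(n : ℝ)))
    (ν : Measure (EuclideanSpace ℝ (Fin n))) [IsFiniteMeasure ν]
    (g : EuclideanSpace ℝ (Fin n) → ℝ) (hg : Integrable g ν)
    (x y : EuclideanSpace ℝ (Fin n)) (hxy : x ≠ y) :
    ∫⁻ z in (closedBall x (2 * ‖x - y‖))ᶜ,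
        ENNReal.ofReal (|K (x - z) - K (y - z)| * |g z|) ∂ν
      ≤ ENNReal.ofReal (4 ^ n * C₁) * radialMax ν g x :=
  statement11_general n K C₁ hK_diff hK_grad ν g x y hxy
end
end
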